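/- Let D be a nontrivial regular (216, 43, 10, 8)-PDS in the group G = (ℤ/2ℤ)³ × (ℤ/3ℤ)³. Then the number of elements of order 2 in D is either 3 or 7. -/
import Mathlib


/-- The number of representations of `g` as `a * b⁻¹` with `a, b ∈ D`. -/
def diffReps {G : Type*} [Group G] [DecidableEq G] (D : Finset G) (g : G) : ℕ :=
  ((D ×ˢ D).filter (fun p => p.1 * p.2⁻¹ = g)).card

/-- `D` is a `(v, k, λ, μ)`-partial difference set in the finite group `G`. -/
def IsPDS {G : Type*} [Group G] [Fintype G] [DecidableEq G]
    (D : Finset G) (v k l m : ℕ) : Prop :=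
  Fintype.card G = v ∧ D.card = k ∧
  ∀ g : G, g ≠ 1 →
    (g ∈ D → diffReps D g = l) ∧ (g ∉ D → diffReps D g = m)

/-- `D` is regular: it does not contain the identity and is closed under inverses. -/
def IsRegularPDS {G : Type*} [Group G] (D : Finset G) : Prop :=
  (1 : G) ∉ D ∧ ∀ d : G, d ∈ D ↔ d⁻¹ ∈ D

/-- A regular PDS `D` is trivial if `D ∪ {e}` or `G \ D` is a subgroup of `G`. -/
def IsTrivialPDS {G : Type*} [Group G] (D : Finset G) : Prop :=
  (∃ H : Subgroup G, (H : Set G) = insert (1 : G) ↑D) ∨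
  (∃ H : Subgroup G, (H : Set G) = (↑D : Set G)ᶜ)

/-- The group `(ℤ/2ℤ)³ × (ℤ/3ℤ)³`, written multiplicatively. -/
abbrev G216 : Type := Multiplicative ((Fin 3 → ZMod 2) × (Fin 3 → ZMod 3))

section PDSAux

noncomputable def om : ℂ := Complex.exp (2 * Real.pi * Complex.I / 3)
lemma hom : IsPrimitiveRoot om 3 := by
  have := Complex.isPrimitiveRoot_exp 3 (by norm_num)
  simpa [om] using this
lemma om3 : om ^ 3 = 1 := hom.pow_eq_one
lemma om_pow_mod (m : ℕ) : om ^ m = om ^ (m % 3) := by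
  conv_lhs => rw [← Nat.div_add_mod m 3, pow_add, pow_mul, om3, one_pow, one_mul]
lemma om_pow_ne_one {m : ℕ} (h : ¬ (3 ∣ m)) : om ^ m ≠ 1 := by
  intro hh
  exact h ((hom.pow_eq_one_iff_dvd m).mp hh)

abbrev V3 := Fin 3 → ZMod 3

def dotp (c h : V3) : ZMod 3 := ∑ i, c i * h i

noncomputable def ee (c h : V3) : ℂ := om ^ (dotp c h).val

lemma dotp_comm (c h : V3) : dotp c h = dotp h c := by
  simp [dotp, mul_comm]

lemma om_val_add (z w : ZMod 3) : om ^ (z + w).val = om ^ z.val * om ^ w.val := by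
  rw [← pow_add, ZMod.val_add, ← om_pow_mod]

lemma ee_add (c h₁ h₂ : V3) : ee c (h₁ + h₂) = ee c h₁ * ee c h₂ := by
  have : dotp c (h₁ + h₂) = dotp c h₁ + dotp c h₂ := by
    simp [dotp, mul_add, Finset.sum_add_distrib]
  rw [ee, this, om_val_add]; rfl

lemma ee_zero (c : V3) : ee c 0 = 1 := by
  simp [ee, dotp]

lemma ee_zero_left (h : V3) : ee 0 h = 1 := by
  simp [ee, dotp]

lemma sum_ee (c : V3) (hc : c ≠ 0) : ∑ h : V3, ee c h = 0 := by
  obtain ⟨i, hi⟩ : ∃ i, c i ≠ 0 := by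
    by_contra hcon
    push_neg at hcon
    exact hc (funext hcon)
  set u : V3 := Pi.single i 1 with hu
  have hdu : dotp c u = c i := by
    rw [dotp]
    rw [Finset.sum_eq_single i]
    · simp [hu]
    · intro j _ hj; simp [hu, Pi.single_eq_of_ne hj]
    · simp
  have hne : ee c u ≠ 1 := by
    rw [ee, hdu]
    apply om_pow_ne_one
    have h1 : (c i).val < 3 := ZMod.val_lt _
    have h2 : (c i).val ≠ 0 := by
      intro hh
      exact hi ((ZMod.val_eq_zero _).mp hh)
    omega
  have key : ee c u * ∑ h : V3, ee c h = ∑ h : V3, ee c h := by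
    rw [Finset.mul_sum]
    rw [show (∑ h : V3, ee c u * ee c h) = ∑ h : V3, ee c (u + h) by
      exact Finset.sum_congr rfl fun h _ => (ee_add c u h).symm]
    exact Equiv.sum_comp (Equiv.addLeft u) (fun h => ee c h)
  have : (ee c u - 1) * ∑ h : V3, ee c h = 0 := by ring_nf; linear_combination key
  rcases mul_eq_zero.mp this with h | h
  · exact absurd (sub_eq_zero.mp h) hne
  · exact h

lemma ee_comm (c h : V3) : ee c h = ee h c := by rw [ee, ee, dotp_comm]

lemma card_V3 : Fintype.card V3 = 27 := by simp

lemma sum_ee_left (h : V3) : ∑ c : V3, ee c h = if h = 0 then 27 else 0 := by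
  split_ifs with hh
  · subst hh
    simp only [ee_zero]
    rw [Finset.sum_const, Finset.card_univ, card_V3]; norm_num
  · rw [show (∑ c : V3, ee c h) = ∑ c : V3, ee h c from
      Finset.sum_congr rfl fun c _ => ee_comm c h]
    exact sum_ee h hh

abbrev G216' : Type := Multiplicative ((Fin 3 → ZMod 2) × (Fin 3 → ZMod 3))

def yy (g : G216') : V3 := (Multiplicative.toAdd g).2

lemma yy_mul_inv (a b : G216') : yy (a * b⁻¹) = yy a + (- yy b) := rfl

lemma yy_inv (a : G216') : yy a⁻¹ = - yy a := rfl

lemma yy_one : yy 1 = 0 := rfl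

lemma sum_ee_yy (c : V3) (hc : c ≠ 0) : ∑ g : G216', ee c (yy g) = 0 := by
  rw [← Equiv.sum_comp (Multiplicative.ofAdd) (fun g => ee c (yy g))]
  have : ∀ p : (Fin 3 → ZMod 2) × (Fin 3 → ZMod 3),
      ee c (yy (Multiplicative.ofAdd p)) = ee c p.2 := fun p => rfl
  simp only [this]
  rw [Fintype.sum_prod_type]
  simp [sum_ee c hc]

def diffReps' {G : Type*} [Group G] [DecidableEq G] (D : Finset G) (g : G) : ℕ :=
  ((D ×ˢ D).filter (fun p => p.1 * p.2⁻¹ = g)).card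

lemma diffReps'_one {G : Type*} [Group G] [DecidableEq G] (D : Finset G) :
    diffReps' D 1 = D.card := by
  rw [diffReps']
  rw [show (D ×ˢ D).filter (fun p => p.1 * p.2⁻¹ = 1) = D.image (fun d => (d, d)) by
    ext ⟨a, b⟩
    simp only [Finset.mem_filter, Finset.mem_product, Finset.mem_image, mul_inv_eq_one,
      Prod.mk.injEq]
    constructor
    · rintro ⟨⟨ha, _⟩, rfl⟩; exact ⟨a, ha, rfl, rfl⟩
    · rintro ⟨x, hx, rfl, rfl⟩; exact ⟨⟨hx, hx⟩, rfl⟩]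
  exact Finset.card_image_of_injective _ (fun a b h => (Prod.mk.injEq _ _ _ _ ▸ h).1)

noncomputable def SS (D : Finset G216') (c : V3) : ℂ := ∑ d ∈ D, ee c (yy d)

lemma SS_symm (D : Finset G216') (hinv : ∀ d : G216', d ∈ D ↔ d⁻¹ ∈ D) (c : V3) :
    SS D c = ∑ d ∈ D, ee c (- yy d) := by
  rw [SS]
  refine Finset.sum_bij' (fun d _ => d⁻¹) (fun d _ => d⁻¹) ?_ ?_ ?_ ?_ ?_
  · intro a ha; exact (hinv a).mp ha
  · intro a ha; exact (hinv a).mp ha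
  · intro a _; simp
  · intro a _; simp
  · intro a _; rw [yy_inv, neg_neg]

lemma SS_quad (D : Finset G216') (hk : D.card = 43) (h1D : (1 : G216') ∉ D)
    (hinv : ∀ d : G216', d ∈ D ↔ d⁻¹ ∈ D)
    (hlm : ∀ g : G216', g ≠ 1 →
      (g ∈ D → diffReps' D g = 10) ∧ (g ∉ D → diffReps' D g = 8))
    (c : V3) (hc : c ≠ 0) :
    SS D c * SS D c = 35 + 2 * SS D c := by
  have h1 : SS D c * SS D c = ∑ p ∈ D ×ˢ D, ee c (yy (p.1 * p.2⁻¹)) := by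
    have e2 := SS_symm D hinv c
    rw [show SS D c * SS D c = (∑ d ∈ D, ee c (yy d)) * ∑ d ∈ D, ee c (- yy d) by
      rw [← e2]; rfl]
    rw [Finset.sum_mul_sum, Finset.sum_product]
    refine Finset.sum_congr rfl fun a _ => Finset.sum_congr rfl fun b _ => ?_
    rw [yy_mul_inv, ee_add]
  have h2 : ∑ p ∈ D ×ˢ D, ee c (yy (p.1 * p.2⁻¹)) =
      ∑ g : G216', (diffReps' D g : ℂ) * ee c (yy g) := by
    rw [← Finset.sum_fiberwise (D ×ˢ D) (fun p => p.1 * p.2⁻¹)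
      (fun p => ee c (yy (p.1 * p.2⁻¹)))]
    refine Finset.sum_congr rfl fun g _ => ?_
    rw [show ∑ p ∈ (D ×ˢ D).filter (fun p => p.1 * p.2⁻¹ = g), ee c (yy (p.1 * p.2⁻¹))
        = ∑ p ∈ (D ×ˢ D).filter (fun p => p.1 * p.2⁻¹ = g), ee c (yy g) from
      Finset.sum_congr rfl fun p hp => by rw [(Finset.mem_filter.mp hp).2]]
    rw [Finset.sum_const, diffReps', nsmul_eq_mul]
  have h3 : ∀ g : G216', (diffReps' D g : ℂ) * ee c (yy g)
      = 8 * ee c (yy g) + 2 * (if g ∈ D then ee c (yy g) else 0)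
        + (if g = 1 then 35 else 0) := by
    intro g
    by_cases hg1 : g = 1
    · subst hg1
      rw [diffReps'_one, hk, yy_one, ee_zero]
      simp [h1D]; norm_num
    · by_cases hgD : g ∈ D
      · rw [(hlm g hg1).1 hgD]; simp only [if_pos hgD, if_neg hg1]; push_cast; ring
      · rw [(hlm g hg1).2 hgD]; simp only [if_neg hgD, if_neg hg1]; push_cast; ring
  rw [h1, h2, Finset.sum_congr rfl fun g _ => h3 g]
  rw [Finset.sum_add_distrib, Finset.sum_add_distrib, ← Finset.mul_sum, ← Finset.mul_sum,
    sum_ee_yy c hc]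
  rw [Finset.sum_ite_eq' Finset.univ (1 : G216') (fun _ => (35 : ℂ))]
  rw [show (∑ g : G216', if g ∈ D then ee c (yy g) else 0) = SS D c by
    rw [SS, ← Finset.sum_filter]
    congr 1
    ext g; simp]
  simp [add_comm]

lemma SS_val (D : Finset G216') (hk : D.card = 43) (h1D : (1 : G216') ∉ D)
    (hinv : ∀ d : G216', d ∈ D ↔ d⁻¹ ∈ D)
    (hlm : ∀ g : G216', g ≠ 1 →
      (g ∈ D → diffReps' D g = 10) ∧ (g ∉ D → diffReps' D g = 8))
    (c : V3) (hc : c ≠ 0) :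
    SS D c = 7 ∨ SS D c = -5 := by
  have hq := SS_quad D hk h1D hinv hlm c hc
  have : (SS D c - 7) * (SS D c + 5) = 0 := by linear_combination hq
  rcases mul_eq_zero.mp this with h | h
  · exact Or.inl (sub_eq_zero.mp h)
  · exact Or.inr (eq_neg_of_add_eq_zero_left h)

lemma SS_total (D : Finset G216') [DecidableEq G216'] :
    ∑ c : V3, SS D c = 27 * ((D.filter fun d => yy d = 0).card : ℂ) := by
  rw [show ∑ c : V3, SS D c = ∑ d ∈ D, ∑ c : V3, ee c (yy d) from Finset.sum_comm]
  simp_rw [sum_ee_left]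
  rw [← Finset.sum_filter, Finset.sum_const, nsmul_eq_mul, mul_comm]

lemma zmod3_add_self : ∀ a : ZMod 3, a + a = 0 ↔ a = 0 := by decide
lemma zmod2_add_self : ∀ a : ZMod 2, a + a = 0 := by decide

lemma toAdd_sq (d : G216') : Multiplicative.toAdd (d * d) =
    Multiplicative.toAdd d + Multiplicative.toAdd d := rfl

lemma ord2_iff (d : G216') (hd : d ≠ 1) : orderOf d = 2 ↔ yy d = 0 := by
  constructor
  · intro h
    have h2 : d * d = 1 := by
      have := pow_orderOf_eq_one d
      rw [h, pow_two] at this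
      exact this
    have hy : yy d + yy d = 0 := congrArg (fun g => yy g) h2
    funext i
    have hi : yy d i + yy d i = 0 := congrFun hy i
    exact (zmod3_add_self _).mp hi
  · intro h
    have h2 : d * d = 1 := by
      apply Multiplicative.toAdd.injective
      rw [toAdd_sq]
      refine Prod.ext ?_ ?_
      · funext i; exact zmod2_add_self _
      · show yy d + yy d = 0
        rw [h]; simp
    exact orderOf_eq_prime (by rwa [pow_two]) hd

lemma card_y0_le (D : Finset G216') [DecidableEq G216'] (h1D : (1 : G216') ∉ D) :
    (D.filter fun d => yy d = 0).card ≤ 7 := by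
  have h7 : ((Finset.univ : Finset (Fin 3 → ZMod 2)).erase 0).card = 7 := by
    rw [Finset.card_erase_of_mem (Finset.mem_univ _), Finset.card_univ]
    simp
  rw [← h7]
  apply Finset.card_le_card_of_injOn (fun d => (Multiplicative.toAdd d).1)
  · intro d hd
    obtain ⟨hdD, hy⟩ := Finset.mem_filter.mp hd
    refine Finset.mem_erase.mpr ⟨?_, Finset.mem_univ _⟩
    intro hx
    apply h1D
    have : d = 1 := by
      apply Multiplicative.toAdd.injective
      exact Prod.ext hx hy
    rwa [this] at hdD
  · intro d1 h1 d2 h2 heq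
    have hy1 := (Finset.mem_filter.mp h1).2
    have hy2 := (Finset.mem_filter.mp h2).2
    apply Multiplicative.toAdd.injective
    exact Prod.ext heq (hy1.trans hy2.symm)

theorem main_thm (D : Finset G216')
    (hk : D.card = 43) (h1D : (1 : G216') ∉ D)
    (hinv : ∀ d : G216', d ∈ D ↔ d⁻¹ ∈ D)
    (hlm : ∀ g : G216', g ≠ 1 →
      (g ∈ D → diffReps' D g = 10) ∧ (g ∉ D → diffReps' D g = 8)) :
    (D.filter (fun d => orderOf d = 2)).card = 3 ∨
    (D.filter (fun d => orderOf d = 2)).card = 7 := by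
  classical
  have hfe : D.filter (fun d => orderOf d = 2) = D.filter (fun d => yy d = 0) := by
    apply Finset.filter_congr
    intro d hd
    have hd1 : d ≠ 1 := by rintro rfl; exact h1D hd
    exact ord2_iff d hd1
  set t := (D.filter fun d => yy d = 0).card with ht
  have htle : t ≤ 7 := card_y0_le D h1D
  have hS0 : SS D 0 = 43 := by
    rw [SS]
    simp only [ee_zero_left]
    rw [Finset.sum_const, hk]; simp
  set A := ((Finset.univ : Finset V3).erase 0).filter (fun c => SS D c = 7) with hA
  set B := ((Finset.univ : Finset V3).erase 0).filter (fun c => ¬ SS D c = 7) with hB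
  have hAB : A.card + B.card = 26 := by
    rw [hA, hB, Finset.card_filter_add_card_filter_not,
      Finset.card_erase_of_mem (Finset.mem_univ _), Finset.card_univ, card_V3]
  have hsplit : ∑ c ∈ (Finset.univ : Finset V3).erase 0, SS D c
      = 7 * A.card - 5 * B.card := by
    rw [← Finset.sum_filter_add_sum_filter_not ((Finset.univ : Finset V3).erase 0)
      (fun c => SS D c = 7)]
    have hAs : ∑ c ∈ A, SS D c = 7 * A.card := by
      rw [show ∑ c ∈ A, SS D c = ∑ c ∈ A, (7 : ℂ) from
        Finset.sum_congr rfl fun c hc => (Finset.mem_filter.mp hc).2]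
      rw [Finset.sum_const, nsmul_eq_mul, mul_comm]
    have hBs : ∑ c ∈ B, SS D c = -5 * B.card := by
      rw [show ∑ c ∈ B, SS D c = ∑ c ∈ B, (-5 : ℂ) from
        Finset.sum_congr rfl fun c hc => by
          obtain ⟨hc1, hc2⟩ := Finset.mem_filter.mp hc
          have hc0 : c ≠ 0 := (Finset.mem_erase.mp hc1).1
          rcases SS_val D hk h1D hinv hlm c hc0 with h | h
          · exact absurd h hc2
          · exact h]
      rw [Finset.sum_const, nsmul_eq_mul, mul_comm]
    rw [hAs, hBs]; ring
  have htot : (27 : ℂ) * t = 43 + (7 * A.card - 5 * B.card) := by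
    rw [← SS_total D, ← Finset.add_sum_erase _ _ (Finset.mem_univ (0 : V3)), hS0, hsplit]
  have hnat : 27 * t + 5 * B.card = 43 + 7 * A.card := by
    have : ((27 * t + 5 * B.card : ℕ) : ℂ) = ((43 + 7 * A.card : ℕ) : ℂ) := by
      push_cast
      linear_combination htot
    exact_mod_cast this
  rw [hfe, ← ht]
  omega

end PDSAux

/-- A nontrivial regular `(216,43,10,8)`-PDS in `(ℤ/2ℤ)³ × (ℤ/3ℤ)³` contains
either 3 or 7 elements of order 2. -/
theorem involutions_in_43_PDS (D : Finset G216)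
    (hD : IsPDS D 216 43 10 8) (hreg : IsRegularPDS D) (hnt : ¬ IsTrivialPDS D) :
    (D.filter (fun d => orderOf d = 2)).card = 3 ∨
    (D.filter (fun d => orderOf d = 2)).card = 7 := by
  obtain ⟨hv, hk, hlm⟩ := hD
  obtain ⟨h1D, hinv⟩ := hreg
  exact main_thm D hk h1D hinv hlm
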